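/- arXiv:1611.01950 — 2 statements merged into one kernel-verified Lean document; each statement's English description precedes it below -/
import Mathlib

section
/- Let M ≥ 1 be an integer, ζ > 0 real, and let G be an L×L positive semidefinite Hermitian matrix with unit diagonal entries (G_{ii} = 1). Define e = (1/L)·tr((I_L + MζG)⁻¹ G). Then e ≤ 1/(1 + Mζ). -/
/-!
In an eigenbasis of `G`, the trace is `∑ λᵢ / (1 + c λᵢ)` with `c = Mζ`, over the eigenvalues
`λᵢ ≥ 0` of `G`, whose mean is `tr G / L = 1`. The map `x ↦ x / (1 + c x)` is concave on
`[0, ∞)`, so it lies below its tangent line at `1`; averaging that tangent bound over the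
eigenvalues gives `1 / (1 + c)`.
-/

open Matrix ComplexOrder

lemma div_one_add_mul_le_tangent {c x : ℝ} (hc : 0 ≤ c) (hx : 0 ≤ x) :
    x / (1 + c * x) ≤ 1 / (1 + c) + (x - 1) / (1 + c) ^ 2 := by
  have h1 : 0 < 1 + c * x := by positivity
  have h2 : 0 < 1 + c := by positivity
  rw [div_add_div _ _ h2.ne' (by positivity), div_le_div_iff₀ h1 (by positivity)]
  nlinarith [mul_nonneg (mul_nonneg h2.le hc) (sq_nonneg (x - 1))]

lemma mean_div_one_add_mul_le {ι : Type*} [Fintype ι] {c : ℝ} (hc : 0 ≤ c) {x : ι → ℝ}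
    (hx : ∀ i, 0 ≤ x i) (hsum : ∑ i, x i = Fintype.card ι) :
    1 / (Fintype.card ι : ℝ) * ∑ i, x i / (1 + c * x i) ≤ 1 / (1 + c) := by
  have h1c : 0 < 1 + c := by positivity
  have hsum_le : ∑ i, x i / (1 + c * x i) ≤ Fintype.card ι / (1 + c) :=
    calc ∑ i, x i / (1 + c * x i)
        ≤ ∑ i, (1 / (1 + c) + (x i - 1) / (1 + c) ^ 2) :=
          Finset.sum_le_sum fun i _ => div_one_add_mul_le_tangent hc (hx i)
      _ = Fintype.card ι / (1 + c) := by
          rw [Finset.sum_add_distrib, ← Finset.sum_div, ← Finset.sum_div, Finset.sum_sub_distrib,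
            hsum]
          simp
  rcases (Fintype.card ι).eq_zero_or_pos with h0 | _
  · rw [h0, Nat.cast_zero, div_zero, zero_mul]
    positivity
  · calc 1 / (Fintype.card ι : ℝ) * ∑ i, x i / (1 + c * x i)
        ≤ 1 / (Fintype.card ι : ℝ) * (Fintype.card ι / (1 + c)) := by gcongr
      _ = 1 / (1 + c) := by field_simp

namespace Matrix.IsHermitian

variable {n 𝕜 : Type*} [Fintype n] [DecidableEq n] [RCLike 𝕜] {A : Matrix n n 𝕜}

lemma trace_cfc (hA : A.IsHermitian) (f : ℝ → ℝ) :
    (cfc f A).trace = ∑ i, (f (hA.eigenvalues i) : 𝕜) := by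
  rw [hA.cfc_eq, IsHermitian.cfc, Unitary.conjStarAlgAut_apply, trace_mul_cycle,
    Unitary.coe_star_mul_self, one_mul, trace_diagonal]
  rfl

lemma inv_one_add_smul_mul_eq_cfc (hA : A.IsHermitian) {c : ℝ}
    (hc : ∀ i, 1 + c * hA.eigenvalues i ≠ 0) :
    (1 + c • A)⁻¹ * A = cfc (fun x => x / (1 + c * x)) A := by
  have hspec : ∀ x ∈ spectrum ℝ A, 1 + c * x ≠ 0 := by
    rw [hA.spectrum_real_eq_range_eigenvalues]
    rintro - ⟨i, rfl⟩
    exact hc i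
  have hone_add : cfc (fun x : ℝ => 1 + c * x) A = 1 + c • A := by
    rw [cfc_add .., cfc_const_one .., cfc_const_mul_id ..]
  have hcont : ContinuousOn (fun x : ℝ => (1 + c * x)⁻¹) (spectrum ℝ A) :=
    (continuousOn_const.add (continuousOn_const.mul continuousOn_id)).inv₀ hspec
  simp_rw [nonsing_inv_eq_ringInverse, ← hone_add, ← cfc_inv _ _ hspec, div_eq_inv_mul,
    cfc_mul (fun x => (1 + c * x)⁻¹) (fun x => x) A hcont, cfc_id' ℝ A]

end Matrix.IsHermitian

theorem normalized_mse_upper_bound_general {L : ℕ} (M : ℕ) (ζ : ℝ) (hζ : 0 < ζ)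
    (G : Matrix (Fin L) (Fin L) ℂ) (hG : G.PosSemidef) (hdiag : ∀ i, G i i = 1) :
    (1 / (L : ℝ)) * ((((1 : Matrix (Fin L) (Fin L) ℂ) +
        ((M * ζ : ℝ) : ℂ) • G)⁻¹ * G).trace.re) ≤ 1 / (1 + M * ζ) := by
  have hc : 0 ≤ (M * ζ : ℝ) := by positivity
  have hsum : ∑ i, hG.1.eigenvalues i = Fintype.card (Fin L) := by
    have htrace := hG.1.trace_eq_sum_eigenvalues
    simp only [trace, diag, hdiag, Finset.sum_const, Finset.card_univ, nsmul_eq_mul,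
      mul_one] at htrace
    simpa using congrArg RCLike.re htrace.symm
  have hdenom : ∀ i, 1 + M * ζ * hG.1.eigenvalues i ≠ 0 := fun i => by
    have := hG.eigenvalues_nonneg i
    positivity
  rw [Complex.coe_smul, hG.1.inv_one_add_smul_mul_eq_cfc hdenom, hG.1.trace_cfc, Complex.re_sum]
  simp_rw [← RCLike.re_to_complex, RCLike.ofReal_re]
  simpa only [Fintype.card_fin] using
    mean_div_one_add_mul_le hc hG.eigenvalues_nonneg hsum

theorem normalized_mse_upper_bound {L : ℕ} (M : ℕ) (hM : 1 ≤ M) (ζ : ℝ) (hζ : 0 < ζ)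
    (G : Matrix (Fin L) (Fin L) ℂ) (hG : G.PosSemidef) (hdiag : ∀ i, G i i = 1) :
    (1 / (L : ℝ)) * ((((1 : Matrix (Fin L) (Fin L) ℂ) +
        ((M * ζ : ℝ) : ℂ) • G)⁻¹ * G).trace.re) ≤ 1 / (1 + M * ζ) :=
  normalized_mse_upper_bound_general M ζ hζ G hG hdiag
end

section
/- Let A be an N×N positive definite Hermitian matrix with condition number κ = λ_max(A)/λ_min(A). Then tr(A⁻¹) ≤ ((1+κ)²/(4κ)) · ∑_{i=1}^N 1/a_{ii}, where a_{ii} are the diagonal entries of A. -/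
/-!
For `x ∈ [m, M]` with `m > 0` one has `(x - m) (M - x) ≥ 0`, i.e. `x + m M / x ≤ m + M`. The
functional calculus turns this into the operator inequality `A + m M A⁻¹ ≤ (m + M) I`, whose
`i`-th diagonal entry reads `aᵢᵢ + m M (A⁻¹)ᵢᵢ ≤ m + M`. Since `aᵢᵢ (m + M - aᵢᵢ) ≤ (m + M)² / 4`,
this gives `(A⁻¹)ᵢᵢ ≤ (m + M)² / (4 m M aᵢᵢ)`; sum over `i` and note
`(1 + κ)² / (4 κ) = (m + M)² / (4 m M)` for `κ = M / m`.
-/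

open Matrix ComplexOrder

theorem add_mul_inv_le_add_of_mem_Icc {m M x : ℝ} (hm : 0 < m) (hx : x ∈ Set.Icc m M) :
    x + m * M * x⁻¹ ≤ m + M := by
  obtain ⟨hmx, hxM⟩ := hx
  have hx0 : 0 < x := hm.trans_le hmx
  have key : m + M - (x + m * M * x⁻¹) = (x - m) * (M - x) / x := by field_simp; ring
  rw [← sub_nonneg, key]
  exact div_nonneg (mul_nonneg (sub_nonneg.2 hmx) (sub_nonneg.2 hxM)) hx0.le

theorem le_sq_div_mul_one_div_of_add_mul_le {a b c s : ℝ} (ha : 0 < a) (hc : 0 < c)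
    (h : a + c * b ≤ s) : b ≤ s ^ 2 / (4 * c) * (1 / a) := by
  rw [div_mul_div_comm, mul_one, le_div_iff₀ (by positivity)]
  nlinarith [sq_nonneg (s - 2 * a)]

theorem add_smul_ringInverse_le_algebraMap {A : Type*} [Ring A] [StarRing A] [TopologicalSpace A]
    [Algebra ℝ A] [PartialOrder A] [StarOrderedRing A]
    [ContinuousFunctionalCalculus ℝ A IsSelfAdjoint] {a : A} (ha : IsSelfAdjoint a) {m M : ℝ}
    (hm : 0 < m) (h : spectrum ℝ a ⊆ Set.Icc m M) :
    a + (m * M) • Ring.inverse a ≤ algebraMap ℝ A (m + M) := by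
  have hne : ∀ x ∈ spectrum ℝ a, x ≠ 0 := fun x hx => (hm.trans_le (h hx).1).ne'
  have hunit : IsUnit a := (spectrum.zero_notMem_iff ℝ).mp fun h0 => hne 0 h0 rfl
  calc a + (m * M) • Ring.inverse a = cfc (fun x => x + m * M * x⁻¹) a := by
        rw [cfc_add .., cfc_const_mul .., cfc_id' ℝ a]
        exact congrArg (a + (m * M) • ·) (cfc_ringInverse_id a hunit).symm
    _ ≤ algebraMap ℝ A (m + M) :=
        cfc_le_algebraMap _ _ a fun x hx => add_mul_inv_le_add_of_mem_Icc hm (h hx)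

namespace Matrix

variable {𝕜 n : Type*} [RCLike 𝕜] [Fintype n] [DecidableEq n] {A : Matrix n n 𝕜} {m M : ℝ}

open scoped MatrixOrder in
theorem IsHermitian.re_diag_add_mul_re_diag_inv_le (hA : A.IsHermitian) (hm : 0 < m)
    (h : ∀ i, hA.eigenvalues i ∈ Set.Icc m M) (i : n) :
    RCLike.re (A i i) + m * M * RCLike.re (A⁻¹ i i) ≤ m + M := by
  have hspec : spectrum ℝ A ⊆ Set.Icc m M := by
    rw [hA.spectrum_real_eq_range_eigenvalues]
    rintro _ ⟨j, rfl⟩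
    exact h j
  have hle := add_smul_ringInverse_le_algebraMap hA.isSelfAdjoint hm hspec
  rw [← nonsing_inv_eq_ringInverse, Matrix.le_iff] at hle
  have hdiag := (RCLike.nonneg_iff.mp (hle.diag_nonneg (i := i))).1
  simpa [algebraMap_eq_diagonal, sub_nonneg, RCLike.smul_re] using hdiag

theorem PosDef.re_trace_inv_le (hA : A.PosDef) (hm : 0 < m)
    (h : ∀ i, hA.1.eigenvalues i ∈ Set.Icc m M) :
    RCLike.re A⁻¹.trace ≤ (m + M) ^ 2 / (4 * (m * M)) * ∑ i, 1 / RCLike.re (A i i) := by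
  rw [trace, map_sum, Finset.mul_sum]
  refine Finset.sum_le_sum fun i _ => le_sq_div_mul_one_div_of_add_mul_le ?_ ?_
    (hA.1.re_diag_add_mul_re_diag_inv_le hm h i)
  · exact (RCLike.pos_iff.mp hA.diag_pos).1
  · exact mul_pos hm (hm.trans_le ((h i).1.trans (h i).2))

end Matrix

theorem trace_inv_kantorovich_upper_bound {N : ℕ} [NeZero N]
    (A : Matrix (Fin N) (Fin N) ℂ) (hA : A.PosDef) :
    (A⁻¹).trace.re ≤
      ((1 + (⨆ i, hA.1.eigenvalues i) / (⨅ i, hA.1.eigenvalues i)) ^ 2 /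
          (4 * ((⨆ i, hA.1.eigenvalues i) / (⨅ i, hA.1.eigenvalues i)))) *
        ∑ i, 1 / (A i i).re := by
  set m := ⨅ i, hA.1.eigenvalues i
  set M := ⨆ i, hA.1.eigenvalues i
  have hm : 0 < m := by
    obtain ⟨j, hj⟩ := exists_eq_ciInf_of_finite (f := hA.1.eigenvalues)
    exact (hA.eigenvalues_pos j).trans_eq hj
  have hbounds : ∀ i, hA.1.eigenvalues i ∈ Set.Icc m M := fun i =>
    ⟨ciInf_le (Set.finite_range _).bddBelow i, le_ciSup (Set.finite_range _).bddAbove i⟩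
  have hκ : (1 + M / m) ^ 2 / (4 * (M / m)) = (m + M) ^ 2 / (4 * (m * M)) := by
    field_simp
  rw [hκ]
  exact hA.re_trace_inv_le hm hbounds
end
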